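/- arXiv:1508.00697 — 17 statements merged into one kernel-verified Lean document; each statement's English description precedes it below -/
import Mathlib

section
/- Let A be a unital C*-algebra and a, b ∈ A with a ≤◇ b (i.e., aA ⊆ bA, Aa ⊆ Ab, and a a* a = a b* a) and b ≤◇ a. Then a = b. -/
/-- The diamond relation: `a ≤◇ b` iff `aA ⊆ bA`, `Aa ⊆ Ab`, and `a a* a = a b* a`. -/
def Diamond {A : Type*} [CStarAlgebra A] (a b : A) : Prop :=
  (∀ x : A, ∃ y : A, a * x = b * y) ∧
  (∀ x : A, ∃ y : A, x * a = y * b) ∧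
  a * star a * a = a * star b * a

theorem diamond_antisymm {A : Type*} [CStarAlgebra A] (a b : A)
    (hab : Diamond a b) (hba : Diamond b a) : a = b := by
  obtain ⟨h1, h2, h3⟩ := hab
  obtain ⟨_, _, h6⟩ := hba
  obtain ⟨u, hu⟩ := h1 1
  obtain ⟨v, hv⟩ := h2 1
  rw [mul_one] at hu
  rw [one_mul] at hv
  set c := a - b with hc
  have e1 : a * star b * b = a * star a * b := by
    calc a * star b * b = v * (b * star b * b) := by rw [hv]; noncomm_ring
    _ = v * (b * star a * b) := by rw [h6]
    _ = a * star a * b := by rw [hv]; noncomm_ring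
  have e2 : b * star b * a = b * star a * a := by
    calc b * star b * a = b * star b * b * u := by rw [hu]; noncomm_ring
    _ = b * star a * b * u := by rw [h6]
    _ = b * star a * a := by rw [hu]; noncomm_ring
  have key : c * star c * c = 0 := by
    have expand : c * star c * c =
        (a * star a * a - a * star b * a) + (a * star b * b - a * star a * b)
        + (b * star b * a - b * star a * a) + (b * star a * b - b * star b * b) := by
      simp only [hc, star_sub]; noncomm_ring
    rw [expand, h3, e1, e2, h6]; noncomm_ring
  have hd : (c * star c) * (c * star c) = 0 := by
    calc (c * star c) * (c * star c) = (c * star c * c) * star c := by noncomm_ring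
    _ = 0 := by rw [key, zero_mul]
  have h0 : c * star c = 0 := by
    rw [← CStarRing.star_mul_self_eq_zero_iff]
    calc star (c * star c) * (c * star c) = (c * star c) * (c * star c) := by
          rw [star_mul, star_star]
    _ = 0 := hd
  have : c = 0 := CStarRing.mul_star_self_eq_zero_iff c |>.mp h0
  rw [hc] at this
  exact sub_eq_zero.mp this
end

section
/- Let A be a unital C*-algebra and a, b, c ∈ A with a ≤◇ b and b ≤◇ c. Then a ≤◇ c. -/
theorem diamond_trans {A : Type*} [CStarAlgebra A] (a b c : A)
    (hab : Diamond a b) (hbc : Diamond b c) : Diamond a c := by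
  obtain ⟨h1, h2, h3⟩ := hab
  obtain ⟨h4, h5, h6⟩ := hbc
  refine ⟨?_, ?_, ?_⟩
  · intro x
    obtain ⟨y, hy⟩ := h1 x
    obtain ⟨z, hz⟩ := h4 y
    exact ⟨z, by rw [hy, hz]⟩
  · intro x
    obtain ⟨y, hy⟩ := h2 x
    obtain ⟨z, hz⟩ := h5 y
    exact ⟨z, by rw [hy, hz]⟩
  · obtain ⟨p, hp⟩ := h1 1
    obtain ⟨q, hq⟩ := h2 1
    rw [mul_one] at hp
    rw [one_mul] at hq
    have : a * star c * a = a * star b * a := by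
      calc a * star c * a = q * (b * star c * b) * p := by
            nth_rewrite 1 [hq]; nth_rewrite 1 [hp]; noncomm_ring
        _ = q * (b * star b * b) * p := by rw [h6]
        _ = a * star b * a := by
            nth_rewrite 1 [hq]; nth_rewrite 1 [hp]; noncomm_ring
    rw [this, ← h3]
end

section
/- The diamond relation ≤◇ is a partial order on any unital C*-algebra A. -/
theorem diamond_isPartialOrder {A : Type*} [CStarAlgebra A] :
    (∀ a : A, Diamond a a) ∧
    (∀ a b : A, Diamond a b → Diamond b a → a = b) ∧
    (∀ a b c : A, Diamond a b → Diamond b c → Diamond a c) := by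
  refine ⟨fun a => ⟨fun x => ⟨x, rfl⟩, fun x => ⟨x, rfl⟩, rfl⟩, ?_, ?_⟩
  · rintro a b ⟨h1, h2, h3⟩ ⟨g1, g2, g3⟩
    obtain ⟨u, hu⟩ := h1 1
    obtain ⟨w, hw⟩ := h2 1
    rw [mul_one] at hu
    rw [one_mul] at hw
    set t := a - b with ht
    have ht2 : t = (w - 1) * b := by rw [ht, sub_mul, one_mul, hw]
    have hbtb : b * star t * b = 0 := by
      have e : b * star t * b = b * star a * b - b * star b * b := by
        rw [ht, star_sub, mul_sub, sub_mul]
      rw [e, ← g3, sub_self]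
    have httb : t * star t * b = 0 := by
      have key : ∀ s : A, t * s * b = (w - 1) * (b * s * b) := by
        intro s
        rw [ht2]
        noncomm_ring
      rw [key (star t), hbtb, mul_zero]
    have htta : t * star t * a = 0 := by
      rw [hu, ← mul_assoc, httb, zero_mul]
    have httt : t * star t * t = 0 := by
      have h4 : t * star t * t = t * star t * a - t * star t * b := by
        rw [← mul_sub, ← ht]
      rw [h4, htta, httb, sub_self]
    have h5 : star t * t = 0 := by
      rw [← CStarRing.star_mul_self_eq_zero_iff]
      have hsa : star (star t * t) = star t * t := by simp [star_mul]
      rw [hsa]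
      calc star t * t * (star t * t) = star t * (t * star t * t) := by noncomm_ring
        _ = 0 := by rw [httt, mul_zero]
    have h6 : t = 0 := CStarRing.star_mul_self_eq_zero_iff t |>.mp h5
    have := sub_eq_zero.mp (ht ▸ h6)
    exact this
  · rintro a b c ⟨h1, h2, h3⟩ ⟨g1, g2, g3⟩
    obtain ⟨u, hu⟩ := h1 1
    obtain ⟨w, hw⟩ := h2 1
    rw [mul_one] at hu
    rw [one_mul] at hw
    refine ⟨fun x => ?_, fun x => ?_, ?_⟩
    · obtain ⟨y, hy⟩ := h1 x
      obtain ⟨z, hz⟩ := g1 y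
      exact ⟨z, by rw [hy, hz]⟩
    · obtain ⟨y, hy⟩ := h2 x
      obtain ⟨z, hz⟩ := g2 y
      exact ⟨z, by rw [hy, hz]⟩
    · have hz : b * star (b - c) * b = 0 := by
        have e : b * star (b - c) * b = b * star b * b - b * star c * b := by
          rw [star_sub, mul_sub, sub_mul]
        rw [e, g3, sub_self]
      have key : ∀ s : A, a * s * a = w * (b * s * b) * u := by
        intro s
        nth_rewrite 2 [hu]
        rw [hw]
        noncomm_ring
      have h0 := key (star (b - c))
      rw [hz, mul_zero, zero_mul] at h0
      have e2 : a * star (b - c) * a = a * star b * a - a * star c * a := by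
        rw [star_sub, mul_sub, sub_mul]
      rw [e2] at h0
      rw [h3, sub_eq_zero.mp h0]
end

section
/- Let A be a unital C*-algebra and p ∈ A. Then p is a projection (p = p* = p²) if and only if p ≤◇ 1 and (1 − p) ≤◇ 1. -/
theorem isProjection_iff_diamond_one {A : Type*} [CStarAlgebra A] (p : A) :
    (p = star p ∧ p = p ^ 2) ↔ (Diamond p 1 ∧ Diamond (1 - p) 1) := by
  constructor
  · rintro ⟨hsa, hp2⟩
    have hpp : p * p = p := by rw [← pow_two, ← hp2]
    have h1p : (1 - p) * (1 - p) = 1 - p := by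
      calc (1 - p) * (1 - p) = 1 - p - p + p * p := by noncomm_ring
        _ = 1 - p := by rw [hpp]; abel
    refine ⟨⟨fun x => ⟨p * x, (one_mul _).symm⟩, fun x => ⟨x * p, (mul_one _).symm⟩, ?_⟩,
      ⟨fun x => ⟨(1 - p) * x, (one_mul _).symm⟩, fun x => ⟨x * (1 - p), (mul_one _).symm⟩, ?_⟩⟩
    · rw [star_one, ← hsa, mul_one, hpp]
      exact hpp
    · rw [star_one, star_sub, star_one, ← hsa, mul_one, h1p]
      exact h1p
  · rintro ⟨⟨-, -, h1⟩, ⟨-, -, h2⟩⟩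
    set q : A := star p with hq
    -- E1 : p q p = p p
    have E1 : p * q * p = p * p := by
      rw [star_one] at h1; rw [h1, mul_one]
    have R1 : p * q * p - p * p = 0 := by rw [E1, sub_self]
    -- e2' : (1-p)(1-q)(1-p) = (1-p)(1-p)
    have e2' : (1 - p) * (1 - q) * (1 - p) = (1 - p) * (1 - p) := by
      rw [star_one] at h2
      have hst : star (1 - p) = 1 - q := by rw [star_sub, star_one]
      rw [hst] at h2; rw [h2, mul_one]
    -- E2 : p q + q p = q + p p
    have E2 : p * q + q * p = q + p * p := by
      have key : p * q + q * p - (q + p * p) =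
          ((1 - p) * (1 - q) * (1 - p) - (1 - p) * (1 - p)) + (p * q * p - p * p) := by
        noncomm_ring
      rw [e2', E1, sub_self, sub_self, add_zero] at key
      exact sub_eq_zero.mp key
    -- E3 : p q + q p = p + q q (star of E2)
    have E3 : p * q + q * p = p + q * q := by
      have h := congrArg star E2
      simp only [hq, star_add, star_mul, star_star] at h
      simp only [hq]
      exact h
    -- A1 : p p - q q = p - q
    have A1 : p * p - q * q = p - q := by
      have h := E2.symm.trans E3
      calc p * p - q * q = (q + p * p) - (q + q * q) := by noncomm_ring
        _ = (p + q * q) - (q + q * q) := by rw [h]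
        _ = p - q := by noncomm_ring
    have R2 : (p + q - 1) * (p - q) + (p - q) * (p + q - 1) = 0 := by
      calc (p + q - 1) * (p - q) + (p - q) * (p + q - 1)
          = 2 * ((p * p - q * q) - (p - q)) := by noncomm_ring
        _ = 0 := by rw [A1, sub_self, mul_zero]
    have R3 : (p + q - 1) * (p + q - 1) - 1 - 3 * ((p - q) * (p - q)) = 0 := by
      calc (p + q - 1) * (p + q - 1) - 1 - 3 * ((p - q) * (p - q))
          = 2 * (((p * q + q * p) + (p * q + q * p)) - ((q + p * p) + (p + q * q))) := by
            noncomm_ring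
        _ = 0 := by rw [E2, E2.symm.trans E3, sub_self, mul_zero]
    set d : A := p - q with hd
    set g : A := p + q - 1 with hg
    -- key identity found by free-algebra reduction
    have key : 8 * (d * d * d) =
        8 * (p * q * p - p * p)
        - ((p + q - 1) * (p + q - 1) - 1 - 3 * ((p - q) * (p - q))) * g
        - ((p + q - 1) * (p + q - 1) - 1 - 3 * ((p - q) * (p - q)))
        - 3 * (((p + q - 1) * (p + q - 1) - 1 - 3 * ((p - q) * (p - q))) * d)
        + 2 * (g * ((p + q - 1) * (p - q) + (p - q) * (p + q - 1)))
        - ((p + q - 1) * (p - q) + (p - q) * (p + q - 1)) * g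
        + ((p + q - 1) * (p - q) + (p - q) * (p + q - 1))
        + ((p + q - 1) * (p - q) + (p - q) * (p + q - 1)) * d
        - 2 * (d * ((p + q - 1) * (p - q) + (p - q) * (p + q - 1))) := by
      rw [hd, hg]; noncomm_ring
    rw [R1, R2, R3] at key
    simp only [mul_zero, zero_mul, sub_zero, add_zero, zero_add] at key
    -- conclude d^3 = 0
    have hd3 : d * d * d = 0 := by
      have h8 : (8 : ℂ) • (d * d * d) = 0 := by
        rw [Algebra.smul_def]
        rw [map_ofNat]
        rw [key]
      rcases smul_eq_zero.mp h8 with h | h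
      · norm_num at h
      · exact h
    -- a := d*d is self-adjoint with a^4 = 0, hence a = 0
    have hsd : star d = -d := by rw [hd, hq, star_sub, star_star]; abel
    have hsa2 : star (d * d) = d * d := by rw [star_mul, hsd]; noncomm_ring
    have ha4 : (d * d) * (d * d) * ((d * d) * (d * d)) = 0 := by
      calc (d * d) * (d * d) * ((d * d) * (d * d))
          = (d * d * d) * (d * (d * d * d) * d) := by noncomm_ring
        _ = 0 := by rw [hd3, zero_mul]
    have hnorm : ‖d * d‖ = 0 := by
      have h1 : ‖star (d * d) * (d * d)‖ = ‖d * d‖ * ‖d * d‖ := CStarRing.norm_star_mul_self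
      rw [hsa2] at h1
      have hsa4 : star ((d * d) * (d * d)) = (d * d) * (d * d) := by
        rw [star_mul, hsa2]
      have h2 : ‖star ((d * d) * (d * d)) * ((d * d) * (d * d))‖
          = ‖(d * d) * (d * d)‖ * ‖(d * d) * (d * d)‖ := CStarRing.norm_star_mul_self
      rw [hsa4, ha4, norm_zero] at h2
      have h3 : ‖(d * d) * (d * d)‖ = 0 := by
        nlinarith [norm_nonneg ((d*d)*(d*d))]
      rw [h1] at h3
      nlinarith [norm_nonneg (d*d)]
    have hdd : d * d = 0 := norm_eq_zero.mp hnorm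
    have hdzero : d = 0 := by
      have hn : ‖d‖ * ‖d‖ = 0 := by
        rw [← CStarRing.norm_star_mul_self (x := d), hsd]
        simp [hdd]
      exact norm_eq_zero.mp (mul_self_eq_zero.mp hn)
    rw [hd] at hdzero
    have hpq : p = q := sub_eq_zero.mp hdzero
    refine ⟨hpq.trans hq, ?_⟩
    rw [← hpq] at E2
    have hpp : p * p = p := add_right_cancel E2
    rw [pow_two]
    exact hpp.symm
end

section
/- Let A be a unital C*-algebra and p ∈ A. If there exists a projection q ∈ A such that p ≤◇ q and (q − p) ≤◇ q, then p is a projection. -/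
theorem isProjection_of_diamond_projection {A : Type*} [CStarAlgebra A] (p q : A)
    (hq : q = star q ∧ q = q ^ 2) (h1 : Diamond p q) (h2 : Diamond (q - p) q) :
    p = star p ∧ p = p ^ 2 := by
  obtain ⟨hqst, hq2⟩ := hq
  have hqq : q * q = q := by rw [← sq, ← hq2]
  obtain ⟨y, hy⟩ := h1.1 1
  rw [mul_one] at hy
  have hqp : q * p = p := by rw [hy, ← mul_assoc, hqq]
  obtain ⟨z, hz⟩ := h1.2.1 1
  rw [one_mul] at hz
  have hpq : p * q = p := by rw [hz, mul_assoc, hqq]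
  have hsq : star p * q = star p := by
    have := congrArg star hqp; rwa [star_mul, ← hqst] at this
  have hqsp : q * star p = star p := by
    have := congrArg star hpq; rwa [star_mul, ← hqst] at this
  have hps : p * star p * p = p * p := by
    have h := h1.2.2
    rw [← hqst] at h
    rw [h, mul_assoc, hqp]
  have hE : star p * p + p * star p = star p + p * p := by
    have h := h2.2.2
    rw [star_sub, ← hqst] at h
    linear_combination (norm := noncomm_ring) h + hqsp * (q - p) + (1 - p) * hsq + hps
  have hEstar : star p * p + p * star p = p + star p * star p := by
    have := congrArg star hE
    simp only [star_add, star_mul, star_star] at this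
    linear_combination (norm := noncomm_ring) this
  have ha3 : (p - star p) * (p - star p) * (p - star p) = 0 := by
    linear_combination (norm := noncomm_ring) hps - p * hE - hEstar * (p - star p)
  have ha4 : ((p - star p) * (p - star p)) * ((p - star p) * (p - star p)) = 0 := by
    linear_combination (norm := noncomm_ring) ha3 * (p - star p)
  have hsa : star (p - star p) = -(p - star p) := by
    rw [star_sub, star_star, neg_sub]
  have hb : (p - star p) * (p - star p) = 0 := by
    have hbsa : star ((p - star p) * (p - star p)) = (p - star p) * (p - star p) := by
      rw [star_mul, hsa, neg_mul_neg]
    have : ‖(p - star p) * (p - star p)‖ * ‖(p - star p) * (p - star p)‖ = 0 := by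
      rw [← CStarRing.norm_star_mul_self, hbsa, ha4, norm_zero]
    have := mul_self_eq_zero.mp this
    exact norm_eq_zero.mp this
  have ha : p - star p = 0 := by
    have : ‖p - star p‖ * ‖p - star p‖ = 0 := by
      rw [← CStarRing.norm_star_mul_self, hsa, neg_mul, hb, neg_zero, norm_zero]
    exact norm_eq_zero.mp (mul_self_eq_zero.mp this)
  have hps2 : p = star p := by rwa [sub_eq_zero] at ha
  refine ⟨hps2, ?_⟩
  rw [← hps2] at hE
  have hpp : p * p = p := add_right_cancel hE
  rw [sq, hpp]
end

section
/- Let A be a unital C*-algebra, a ∈ A a regular element with Moore-Penrose inverse a†, and b ∈ A. Then a ≤◇ b if and only if aA ⊆ bA, Aa ⊆ Ab, and a† b a† = a†. -/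
theorem diamond_iff_mp {A : Type*} [CStarAlgebra A] (a ad b : A)
    (h1 : a * ad * a = a) (h2 : ad * a * ad = ad)
    (h3 : star (a * ad) = a * ad) (h4 : star (ad * a) = ad * a) :
    Diamond a b ↔
      ((∀ x : A, ∃ y : A, a * x = b * y) ∧ (∀ x : A, ∃ y : A, x * a = y * b) ∧
        ad * b * ad = ad) := by
  have e1 : ad * star ad * star a = ad := by
    calc ad * star ad * star a = ad * star (a * ad) := by rw [star_mul, mul_assoc]
    _ = ad * a * ad := by rw [h3, mul_assoc]
    _ = ad := h2
  have e2 : star a * star ad * ad = ad := by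
    calc star a * star ad * ad = star (ad * a) * ad := by rw [star_mul]
    _ = ad * a * ad := by rw [h4]
    _ = ad := h2
  have e3 : a * star a * star ad = a := by
    calc a * star a * star ad = a * star (ad * a) := by rw [star_mul, mul_assoc]
    _ = a * ad * a := by rw [h4, mul_assoc]
    _ = a := h1
  have e4 : star ad * star a * a = a := by
    calc star ad * star a * a = star (a * ad) * a := by rw [star_mul]
    _ = a * ad * a := by rw [h3]
    _ = a := h1
  constructor
  · rintro ⟨hA, hB, hC⟩
    refine ⟨hA, hB, ?_⟩
    have hC' : star a * a * star a = star a * b * star a := by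
      have := congrArg star hC
      simpa [star_mul, mul_assoc] using this
    calc ad * b * ad
        = (ad * star ad * star a) * b * (star a * star ad * ad) := by rw [e1, e2]
      _ = ad * star ad * (star a * b * star a) * star ad * ad := by
          simp only [mul_assoc]
      _ = ad * star ad * (star a * a * star a) * star ad * ad := by rw [← hC']
      _ = (ad * star ad * star a) * a * (star a * star ad * ad) := by
          simp only [mul_assoc]
      _ = ad * a * ad := by rw [e1, e2]
      _ = ad := h2
  · rintro ⟨hA, hB, hC⟩
    refine ⟨hA, hB, ?_⟩
    have hC' : star ad * star b * star ad = star ad := by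
      have := congrArg star hC
      simpa [star_mul, mul_assoc] using this
    have k1 : a * star a * star ad * star b * (star ad * star a * a) = a * star b * a := by
      rw [e3, e4]
    have k2 : a * star a * star ad * star b * (star ad * star a * a)
        = a * star a * a := by
      calc a * star a * star ad * star b * (star ad * star a * a)
          = a * star a * (star ad * star b * star ad) * star a * a := by
            simp only [mul_assoc]
        _ = a * star a * star ad * star a * a := by rw [hC']
        _ = a * star a * a := by
            rw [show a * star a * star ad * star a * a
                = a * star a * (star ad * star a * a) by simp only [mul_assoc], e4]
    exact k2.symm.trans k1
end

section
/- Let A be a unital C*-algebra, a ∈ A regular, and b ∈ A. If a ≤* b (i.e., a*a = a*b and aa* = ba*), then a ≤◇ b. -/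
/-- In a unital C*-algebra, `1 + x x*` is invertible. -/
lemma isUnit_one_add_mul_star {A : Type*} [CStarAlgebra A] (x : A) :
    IsUnit (1 + x * star x) := by
  have hneg : (-1 : ℝ) ∉ spectrum ℝ (x * star x) := by
    intro hmem
    have h := spectrum_star_mul_self_nonneg (b := star x) (-1) (by simpa using hmem)
    linarith
  rw [spectrum.notMem_iff] at hneg
  have heq : algebraMap ℝ A (-1) - x * star x = -(1 + x * star x) := by
    simp only [map_neg, map_one]
    noncomm_ring
  rw [heq] at hneg
  exact (IsUnit.neg_iff _).mp hneg

/-- For an idempotent `q` in a unital C*-algebra, `q ∈ q q* A`. -/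
lemma idempotent_mem_self_mul_star {A : Type*} [CStarAlgebra A] {q : A}
    (hq : q * q = q) : ∃ t : A, q = q * star q * t := by
  obtain ⟨v, hv⟩ := (isUnit_one_add_mul_star (q - star q)).exists_right_inv
  refine ⟨q * v, ?_⟩
  have h2 : star q * star q = star q := by rw [← star_mul, hq]
  have key : q * (1 + (q - star q) * star (q - star q)) = q * star q * q := by
    simp only [star_sub, star_star, mul_add, mul_one, mul_sub, sub_mul, add_mul, ← mul_assoc, hq]
    rw [mul_assoc q (star q) (star q), h2]
    abel
  calc q = q * ((1 + (q - star q) * star (q - star q)) * v) := by rw [hv, mul_one]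
    _ = q * (1 + (q - star q) * star (q - star q)) * v := by rw [mul_assoc]
    _ = q * star q * q * v := by rw [key]
    _ = q * star q * (q * v) := by rw [mul_assoc]

theorem star_le_implies_diamond {A : Type*} [CStarAlgebra A] (a b : A)
    (hreg : ∃ c : A, a * c * a = a)
    (h1 : star a * a = star a * b) (h2 : a * star a = b * star a) :
    Diamond a b := by
  obtain ⟨c, hc⟩ := hreg
  have hap : a * (c * a) = a := by rw [← mul_assoc, hc]
  -- p = c * a is idempotent
  have hp : (c * a) * (c * a) = c * a := by
    rw [mul_assoc, hap]
  -- q* where q = a * c : star q is idempotent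
  have hq : star (a * c) * star (a * c) = star (a * c) := by
    rw [← star_mul, ← mul_assoc, hc]
  -- a ∈ a a* A
  obtain ⟨t, ht⟩ := idempotent_mem_self_mul_star hp
  have haRight : a = a * star a * (star c * t) := by
    calc a = a * (c * a) := hap.symm
      _ = a * ((c * a) * star (c * a) * t) := by rw [← ht]
      _ = (a * (c * a)) * star (c * a) * t := by noncomm_ring
      _ = a * (star a * star c) * t := by rw [hap, star_mul]
      _ = a * star a * (star c * t) := by noncomm_ring
  -- a ∈ A a* a
  obtain ⟨s, hs⟩ := idempotent_mem_self_mul_star hq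
  have hq' : a * c = star s * (star c * star a) * (a * c) := by
    have := congrArg star hs
    simpa [star_mul, mul_assoc] using this
  have haLeft : a = (star s * star c) * (star a * a) := by
    calc a = (a * c) * a := by rw [hc]
      _ = (star s * (star c * star a) * (a * c)) * a := by rw [← hq']
      _ = star s * star c * (star a * (a * (c * a))) := by noncomm_ring
      _ = (star s * star c) * (star a * a) := by rw [hap]
  refine ⟨?_, ?_, ?_⟩
  · intro x
    refine ⟨star a * (star c * t) * x, ?_⟩
    calc a * x = a * star a * (star c * t) * x := by rw [← haRight]
      _ = b * star a * (star c * t) * x := by rw [h2]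
      _ = b * (star a * (star c * t) * x) := by noncomm_ring
  · intro x
    refine ⟨x * (star s * star c * star a), ?_⟩
    calc x * a = x * ((star s * star c) * (star a * a)) := by rw [← haLeft]
      _ = x * ((star s * star c) * (star a * b)) := by rw [h1]
      _ = x * (star s * star c * star a) * b := by noncomm_ring
  · have h2' : a * star a = a * star b := by
      have := congrArg star h2
      simpa [star_mul] using this
    rw [h2']
end

section
/- Let A be a unital prime C*-algebra and a ∈ A regular with Moore-Penrose inverse a†. If a is maximal with respect to the diamond partial order (i.e., a ≤◇ b implies a = b for all b ∈ A), then a is left invertible or right invertible. -/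
theorem maximal_diamond_of_prime {A : Type*} [CStarAlgebra A]
    (hprime : ∀ x y : A, (∀ z : A, x * z * y = 0) → x = 0 ∨ y = 0)
    (a ad : A)
    (h1 : a * ad * a = a) (h2 : ad * a * ad = ad)
    (h3 : star (a * ad) = a * ad) (h4 : star (ad * a) = ad * a)
    (hmax : ∀ b : A, Diamond a b → a = b) :
    (∃ c : A, c * a = 1) ∨ (∃ c : A, a * c = 1) := by
  set p := a * ad with hp
  set q := ad * a with hq
  have haq : a * q = a := by rw [hq, ← mul_assoc, h1]
  have hpa : p * a = a := by rw [hp, h1]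
  have hq2 : (1 - q) * q = 0 := by
    have : q * q = q := by rw [hq, show ad * a * (ad * a) = ad * a * ad * a by noncomm_ring, h2]
    rw [sub_mul, one_mul, this, sub_self]
  have hp2 : p * (1 - p) = 0 := by
    have : p * p = p := by rw [hp, show a * ad * (a * ad) = a * ad * a * ad by noncomm_ring, h1]
    rw [mul_sub, mul_one, this, sub_self]
  have haq0 : a * (1 - q) = 0 := by rw [mul_sub, mul_one, haq, sub_self]
  have key : ∀ z : A, (1 - p) * z * (1 - q) = 0 := by
    intro z
    set b := a + (1 - p) * z * (1 - q) with hb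
    have hbq : b * q = a := by
      rw [hb, add_mul, haq, mul_assoc, hq2, mul_zero, add_zero]
    have hpb : p * b = a := by
      rw [hb, mul_add, hpa, show p * ((1 - p) * z * (1 - q)) = p * (1 - p) * (z * (1 - q)) by
        noncomm_ring, hp2, zero_mul, add_zero]
    have hdia : Diamond a b := by
      refine ⟨fun x => ⟨q * x, ?_⟩, fun x => ⟨x * p, ?_⟩, ?_⟩
      · rw [← mul_assoc, hbq]
      · rw [mul_assoc, hpb]
      · have hsb : star b = star a + (1 - q) * star z * (1 - p) := by
          rw [hb, star_add]
          congr 1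
          rw [star_mul, star_mul, star_sub, star_sub, star_one, h3, h4, mul_assoc]
        rw [hsb, mul_add, add_mul,
          show a * ((1 - q) * star z * (1 - p)) * a
            = a * (1 - q) * (star z * (1 - p) * a) by noncomm_ring,
          haq0, zero_mul, add_zero]
    have h := hmax b hdia
    rw [hb, left_eq_add] at h
    exact h
  rcases hprime _ _ key with h | h
  · right
    exact ⟨ad, by rw [← hp]; rw [sub_eq_zero] at h; exact h.symm⟩
  · left
    exact ⟨ad, by rw [← hq]; rw [sub_eq_zero] at h; exact h.symm⟩
end

section
/- Let A be a unital C*-algebra and a ∈ A left invertible. If a ≤◇ b for some b ∈ A, then a = b. (Hence left invertible elements are maximal for the diamond partial order.) -/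
theorem diamond_eq_of_leftInvertible {A : Type*} [CStarAlgebra A] (a b : A)
    (hl : ∃ c : A, c * a = 1) (h : Diamond a b) : a = b := by
  obtain ⟨c, hc⟩ := hl
  obtain ⟨h1, h2, h3⟩ := h
  obtain ⟨z, hz⟩ := h1 1
  rw [mul_one] at hz
  -- from h3 and c : star a * a = star b * a
  have key : star a * a = star b * a := by
    have := congrArg (c * ·) h3
    simpa [mul_assoc, ← mul_assoc c a, hc] using this
  have key' : star a * b = star a * a := by
    have := congrArg star key
    simpa [mul_assoc] using this.symm
  -- star a * a * z = star a * a
  have h4 : star a * a * z = star a * a := by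
    calc star a * a * z = star a * (b * z) := by rw [← key', mul_assoc]
    _ = star a * a := by rw [← hz]
  have h5 : a * (z - 1) = 0 := by
    rw [← CStarRing.star_mul_self_eq_zero_iff]
    have : star (a * (z - 1)) * (a * (z - 1))
        = star (z - 1) * (star a * a * z - star a * a) := by
      simp [mul_sub, sub_mul, star_mul, mul_assoc]
    rw [this, h4, sub_self, mul_zero]
  have h6 : a * z = a := by
    have := sub_eq_zero.mp (by simpa [mul_sub] using h5)
    simpa using this
  have h7 : z = 1 := by
    calc z = c * a * z := by rw [hc, one_mul]
    _ = c * a := by rw [mul_assoc, h6]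
    _ = 1 := hc
  rw [hz, h7, mul_one]
end

section
/- Let A be a unital C*-algebra and a ∈ A right invertible. If a ≤◇ b for some b ∈ A, then a = b. -/
lemma mul_star_eq_mul_star_of_mul_eq_one {R : Type*} [Monoid R] [StarMul R] {a b c : R}
    (hc : a * c = 1) (h : a * star a * a = a * star b * a) : a * star a = b * star a := by
  have hab : a * star a = a * star b := by
    simpa [mul_assoc, hc] using congrArg (· * c) h
  simpa using congrArg star hab

lemma eq_of_mul_eq_one_of_mul_eq_one {M : Type*} [Monoid M] {a b s y : M}
    (ha : a * s = 1) (hb : b * s = 1) (hy : a = y * b) : a = b := by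
  have hy1 : y = 1 := calc
    y = y * (b * s) := by rw [hb, mul_one]
    _ = a * s := by rw [hy, mul_assoc]
    _ = 1 := ha
  rw [hy, hy1, one_mul]

lemma isUnit_mul_star_of_mul_eq_one {A : Type*} [CStarAlgebra A] {a c : A} (hc : a * c = 1) :
    IsUnit (a * star a) := by
  let := CStarAlgebra.spectralOrder A
  let := CStarAlgebra.spectralOrderedRing A
  have hone : a * (c * star c) * star a = 1 := by
    simpa [mul_assoc, star_mul] using congrArg (fun x => x * star x) hc
  have hle : 1 ≤ algebraMap ℝ A (‖c‖ ^ 2) * (a * star a) := by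
    calc (1 : A) = a * (c * star c) * star a := hone.symm
      _ ≤ a * algebraMap ℝ A (‖c‖ ^ 2) * star a :=
        star_right_conjugate_le_conjugate CStarAlgebra.mul_star_le_algebraMap_norm_sq a
      _ = algebraMap ℝ A (‖c‖ ^ 2) * (a * star a) := by
        rw [← Algebra.commutes, mul_assoc]
  exact ((Algebra.commute_algebraMap_left _ _).isUnit_mul_iff.mp
    (CStarAlgebra.isUnit_of_le 1 hle)).2

theorem diamond_eq_of_rightInvertible {A : Type*} [CStarAlgebra A] (a b : A)
    (hr : ∃ c : A, a * c = 1) (h : Diamond a b) : a = b := by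
  obtain ⟨c, hc⟩ := hr
  obtain ⟨-, hleft, hdiag⟩ := h
  have hab : a * star a = b * star a := mul_star_eq_mul_star_of_mul_eq_one hc hdiag
  obtain ⟨u, hu⟩ := isUnit_mul_star_of_mul_eq_one hc
  have has : a * (star a * ↑u⁻¹) = 1 := by rw [← mul_assoc, ← hu, u.mul_inv]
  have hbs : b * (star a * ↑u⁻¹) = 1 := by rw [← mul_assoc, ← hab, ← hu, u.mul_inv]
  obtain ⟨y, hy⟩ := hleft 1
  exact eq_of_mul_eq_one_of_mul_eq_one has hbs (by simpa using hy)
end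

section
/- Let A be a unital C*-algebra and u ∈ A with u*u = λ·1 for some λ > 0. Then for all a, b ∈ A, a ≤◇ b implies ua ≤◇ ub. -/
theorem diamond_mul_left_isometry {A : Type*} [CStarAlgebra A] (u : A)
    (lam : ℝ) (hlam : 0 < lam) (hu : star u * u = (lam : ℂ) • 1)
    (a b : A) (h : Diamond a b) : Diamond (u * a) (u * b) := by
  obtain ⟨h1, h2, h3⟩ := h
  refine ⟨?_, ?_, ?_⟩
  · intro x
    obtain ⟨y, hy⟩ := h1 x
    exact ⟨y, by rw [mul_assoc, hy, mul_assoc]⟩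
  · intro x
    obtain ⟨y, hy⟩ := h2 (x * u)
    refine ⟨((lam : ℂ)⁻¹ • y) * star u, ?_⟩
    have hl : ((lam : ℂ)⁻¹ • y) * (star u * u) = y := by
      rw [hu, smul_mul_assoc, mul_smul_comm, mul_one, smul_smul,
        inv_mul_cancel₀ (by exact_mod_cast hlam.ne'), one_smul]
    calc x * (u * a) = x * u * a := by rw [mul_assoc]
      _ = y * b := hy
      _ = ((lam : ℂ)⁻¹ • y) * (star u * u) * b := by rw [hl]
      _ = ((lam : ℂ)⁻¹ • y * star u) * (u * b) := by
          simp only [mul_assoc]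
  · have key : ∀ c : A, u * a * star (u * c) * (u * a)
        = (lam : ℂ) • (u * (a * star c * a)) := by
      intro c
      calc u * a * star (u * c) * (u * a)
          = u * (a * star c * ((star u * u) * a)) := by
            simp only [star_mul, mul_assoc]
        _ = u * (a * star c * ((lam : ℂ) • a)) := by rw [hu, smul_mul_assoc, one_mul]
        _ = (lam : ℂ) • (u * (a * star c * a)) := by
            simp only [mul_smul_comm]
    rw [key a, key b, h3]
end

section
/- Let A be a unital C*-algebra and u ∈ A with uu* = λ·1 for some λ > 0. Then for all a, b ∈ A, a ≤◇ b implies au ≤◇ bu. -/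
theorem diamond_mul_right_coisometry {A : Type*} [CStarAlgebra A] (u : A)
    (lam : ℝ) (hlam : 0 < lam) (hu : u * star u = (lam : ℂ) • 1)
    (a b : A) (h : Diamond a b) : Diamond (a * u) (b * u) := by
  obtain ⟨h1, h2, h3⟩ := h
  have hinv : u * ((lam : ℂ)⁻¹ • star u) = 1 := by
    rw [mul_smul_comm, hu, smul_smul, inv_mul_cancel₀, one_smul]
    exact_mod_cast hlam.ne'
  refine ⟨fun x => ?_, fun x => ?_, ?_⟩
  · obtain ⟨y, hy⟩ := h1 (u * x)
    refine ⟨(lam : ℂ)⁻¹ • star u * y, ?_⟩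
    calc a * u * x = b * y := by rw [mul_assoc, hy]
      _ = b * (u * ((lam : ℂ)⁻¹ • star u)) * y := by rw [hinv, mul_one]
      _ = b * u * ((lam : ℂ)⁻¹ • star u * y) := by simp only [mul_assoc]
  · obtain ⟨y, hy⟩ := h2 x
    exact ⟨y, by rw [← mul_assoc, hy, mul_assoc]⟩
  · have key : ∀ c : A, a * u * star (c * u) * (a * u) = (lam : ℂ) • (a * star c * (a * u)) := by
      intro c
      calc a * u * star (c * u) * (a * u)
          = a * (u * star u) * (star c * (a * u)) := by
            simp only [star_mul, mul_assoc]
        _ = (lam : ℂ) • (a * star c * (a * u)) := by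
            rw [hu, mul_smul_comm, smul_mul_assoc, mul_one, mul_assoc]
    rw [key a, key b, ← mul_assoc, ← mul_assoc, h3]
end

section
/- Let A be a unital C*-algebra with essential socle. Then the minimal nonzero elements of A with respect to the diamond partial order are exactly the rank-one elements, i.e., for u, v rank-one, u ≤◇ v implies u = v, and for every nonzero a ∈ A there exists a rank-one u with u ≤◇ a. -/
/-- A nonzero element `u` is rank-one iff `uAu = ℂu`. -/
def IsRankOne {A : Type*} [CStarAlgebra A] (u : A) : Prop :=
  u ≠ 0 ∧ ∀ x : A, ∃ c : ℂ, u * x * u = c • u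

lemma star_mul_self_eq_zero' {A : Type*} [CStarAlgebra A] {x : A}
    (h : star x * x = 0) : x = 0 := by
  have : ‖x‖ * ‖x‖ = 0 := by rw [← CStarRing.norm_star_mul_self, h, norm_zero]
  exact norm_eq_zero.mp (mul_self_eq_zero.mp this)

lemma cube_zero {A : Type*} [CStarAlgebra A] {a : A}
    (h : a * star a * a = 0) : a = 0 := by
  have h1 : star (star a * a) * (star a * a) = 0 := by
    have : star (star a * a) * (star a * a) = star a * (a * star a * a) := by
      simp [star_mul, mul_assoc]
    rw [this, h, mul_zero]
  exact star_mul_self_eq_zero' (star_mul_self_eq_zero' h1)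

lemma smul_cancel {A : Type*} [CStarAlgebra A] {c d : ℂ} {u : A}
    (hu : u ≠ 0) (h : c • u = d • u) : c = d := by
  have : (c - d) • u = 0 := by rw [sub_smul, h, sub_self]
  rcases smul_eq_zero.mp this with h' | h'
  · exact sub_eq_zero.mp h'
  · exact absurd h' hu

theorem minimals_diamond_eq_rankOne {A : Type*} [CStarAlgebra A]
    (hEss : ∀ a : A, (∀ u : A, IsRankOne u → a * u = 0) → a = 0) :
    (∀ u v : A, IsRankOne u → IsRankOne v → Diamond u v → u = v) ∧
    (∀ a : A, a ≠ 0 → ∃ u : A, IsRankOne u ∧ Diamond u a) := by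
  constructor
  · -- minimality: rank-one below rank-one implies equal
    intro u v hu hv hd
    obtain ⟨y, hy⟩ := hd.1 1
    obtain ⟨z, hz⟩ := hd.2.1 1
    rw [mul_one] at hy
    rw [one_mul] at hz
    -- hy : u = v * y ; hz : u = z * v
    have hune := hu.1
    obtain ⟨d₀, hd₀⟩ := hu.2 (star u)
    obtain ⟨d₁, hd₁⟩ := hu.2 (star v)
    have hd0ne : d₀ ≠ 0 := by
      intro h0
      exact hune (cube_zero (by rw [hd₀, h0, zero_smul]))
    have hdd : d₁ = d₀ := smul_cancel hune (by rw [← hd₁, ← hd₀, hd.2.2])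
    obtain ⟨t₁, ht₁⟩ := hv.2 (star u)
    obtain ⟨t₂, ht₂⟩ := hv.2 (star v)
    -- key: u * x * u = c • (z * u) whenever v * x * v = c • v
    have key : ∀ (x : A) (c : ℂ), v * x * v = c • v → u * x * u = c • (z * u) := by
      intro x c hc
      calc u * x * u = (z * v) * x * (v * y) := by rw [← hz, ← hy]
        _ = z * (v * x * v) * y := by noncomm_ring
        _ = z * (c • v) * y := by rw [hc]
        _ = c • (z * (v * y)) := by
            rw [mul_smul_comm, smul_mul_assoc, mul_assoc]
        _ = c • (z * u) := by rw [← hy]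
    have k1 := key (star u) t₁ ht₁
    have k2 := key (star v) t₂ ht₂
    -- d₀ • u = t₁ • (z * u)
    have h1 : d₀ • u = t₁ • (z * u) := by rw [← hd₀, k1]
    have h2 : d₀ • u = t₂ • (z * u) := by rw [← hdd, ← hd₁, k2]
    have hzu : z * u ≠ 0 := by
      intro h0
      rw [h0, smul_zero] at h1
      exact hune (by simpa [hd0ne] using smul_eq_zero.mp h1)
    have ht12 : t₂ = t₁ := smul_cancel hzu (by rw [← h2, h1])
    set t := t₁ with hts
    rw [ht12] at ht₂
    -- the eight product identities
    have e3 : v * star u * u = t • u := by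
      calc v * star u * u = v * star u * (v * y) := by rw [← hy]
        _ = (v * star u * v) * y := by noncomm_ring
        _ = (t • v) * y := by rw [ht₁]
        _ = t • (v * y) := by rw [smul_mul_assoc]
        _ = t • u := by rw [← hy]
    have e4 : u * star u * v = t • u := by
      calc u * star u * v = (z * v) * star u * v := by rw [← hz]
        _ = z * (v * star u * v) := by noncomm_ring
        _ = z * (t • v) := by rw [ht₁]
        _ = t • (z * v) := by rw [mul_smul_comm]
        _ = t • u := by rw [← hz]
    have e5 : u * star v * v = t • u := by
      calc u * star v * v = (z * v) * star v * v := by rw [← hz]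
        _ = z * (v * star v * v) := by noncomm_ring
        _ = z * (t • v) := by rw [ht₂]
        _ = t • (z * v) := by rw [mul_smul_comm]
        _ = t • u := by rw [← hz]
    have e6 : v * star v * u = t • u := by
      calc v * star v * u = v * star v * (v * y) := by rw [← hy]
        _ = (v * star v * v) * y := by noncomm_ring
        _ = (t • v) * y := by rw [ht₂]
        _ = t • (v * y) := by rw [smul_mul_assoc]
        _ = t • u := by rw [← hy]
    have e8 : u * star v * u = d₀ • u := by rw [hd₁, hdd]
    have expand : (v - u) * star (v - u) * (v - u) =
        v * star v * v - v * star v * u - v * star u * v + v * star u * u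
        - u * star v * v + u * star v * u + u * star u * v - u * star u * u := by
      rw [star_sub]; noncomm_ring
    have hzero : (v - u) * star (v - u) * (v - u) = 0 := by
      rw [expand, ht₂, e6, ht₁, e3, e5, e8, e4, hd₀]
      module
    have := cube_zero hzero
    exact (sub_eq_zero.mp this).symm
  · -- existence of a rank-one element below any nonzero a
    intro a ha
    obtain ⟨e, he, hae⟩ : ∃ e : A, IsRankOne e ∧ a * e ≠ 0 := by
      by_contra h
      push_neg at h
      exact ha (hEss a h)
    set v : A := a * e with hv_def
    have hvne : v ≠ 0 := hae
    -- v is rank-one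
    have hv : IsRankOne v := by
      refine ⟨hvne, fun x => ?_⟩
      obtain ⟨c, hc⟩ := he.2 (x * a)
      refine ⟨c, ?_⟩
      calc v * x * v = a * (e * (x * a) * e) := by rw [hv_def]; noncomm_ring
        _ = a * (c • e) := by rw [hc]
        _ = c • (a * e) := by rw [mul_smul_comm]
        _ = c • v := rfl
    -- star a * v ≠ 0
    have hav : star a * v ≠ 0 := by
      intro h0
      apply hvne
      apply star_mul_self_eq_zero'
      calc star v * v = star e * (star a * v) := by
            rw [hv_def, star_mul, mul_assoc]
        _ = 0 := by rw [h0, mul_zero]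
    set u₀ : A := v * star v * a with hu₀_def
    have hu₀ne : u₀ ≠ 0 := by
      intro h0
      apply hav
      have hx : star (star v * a) * (star v * a) = 0 := by
        calc star (star v * a) * (star v * a) = star a * u₀ := by
              rw [hu₀_def]; simp [star_mul, mul_assoc]
          _ = 0 := by rw [h0, mul_zero]
      have hx0 := star_mul_self_eq_zero' hx
      calc star a * v = star (star v * a) := by simp [star_mul]
        _ = 0 := by rw [hx0, star_zero]
    -- u₀ is rank-one
    have hu₀ : IsRankOne u₀ := by
      refine ⟨hu₀ne, fun x => ?_⟩
      obtain ⟨c, hc⟩ := hv.2 (star v * a * x)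
      refine ⟨c, ?_⟩
      calc u₀ * x * u₀ = (v * (star v * a * x) * v) * (star v * a) := by
            rw [hu₀_def]; noncomm_ring
        _ = (c • v) * (star v * a) := by rw [hc]
        _ = c • u₀ := by rw [hu₀_def, smul_mul_assoc]; congr 1; noncomm_ring
    -- the scalar s with v v* v = s • v, s ≠ 0
    obtain ⟨s, hs⟩ := hv.2 (star v)
    have hsne : s ≠ 0 := by
      intro h0
      exact hvne (cube_zero (by rw [hs, h0, zero_smul]))
    -- the scalar σ' with v (v* a a*) v = σ' • v, σ' ≠ 0
    obtain ⟨σ, hσ⟩ := hv.2 (star v * a * star a)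
    have hσne : σ ≠ 0 := by
      intro h0
      have h1 : v * (star v * a * star a) * v = 0 := by rw [hσ, h0, zero_smul]
      have h2 : (star v * v * star v) * (a * (star a * v)) = 0 := by
        calc (star v * v * star v) * (a * (star a * v))
            = star v * (v * (star v * a * star a) * v) := by noncomm_ring
          _ = 0 := by rw [h1, mul_zero]
      have h3 : star v * v * star v = star s • star v := by
        calc star v * v * star v = star (v * star v * v) := by
              simp [star_mul, mul_assoc]
          _ = star s • star v := by rw [hs, star_smul]
      rw [h3, smul_mul_assoc] at h2
      rcases smul_eq_zero.mp h2 with h' | h'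
      · exact hsne (by simpa using h')
      · apply hav
        apply star_mul_self_eq_zero'
        calc star (star a * v) * (star a * v) = star v * (a * (star a * v)) := by
              simp [star_mul, mul_assoc]
          _ = 0 := h'
    -- u₀ a* u₀ = σ • u₀
    have hua : u₀ * star a * u₀ = σ • u₀ := by
      calc u₀ * star a * u₀
          = (v * (star v * a * star a) * v) * (star v * a) := by
            rw [hu₀_def]; noncomm_ring
        _ = (σ • v) * (star v * a) := by rw [hσ]
        _ = σ • u₀ := by rw [hu₀_def, smul_mul_assoc]; congr 1; noncomm_ring
    -- μ with u₀ u₀* u₀ = μ • u₀, μ ≠ 0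
    obtain ⟨μ, hμ⟩ := hu₀.2 (star u₀)
    have hμne : μ ≠ 0 := by
      intro h0
      exact hu₀ne (cube_zero (by rw [hμ, h0, zero_smul]))
    -- the scaling factor
    set l : ℂ := starRingEnd ℂ (σ / μ) with hl_def
    have hlne : l ≠ 0 := by
      simp only [hl_def, map_ne_zero]
      exact div_ne_zero hσne hμne
    have hlstar : star l * μ = σ := by
      have : star l = σ / μ := by
        simp [hl_def, Complex.star_def, Complex.conj_conj]
      rw [this, div_mul_cancel₀ _ hμne]
    refine ⟨l • u₀, ⟨⟨smul_ne_zero hlne hu₀ne, fun x => ?_⟩, ?_, ?_, ?_⟩⟩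
    · -- rank one of l • u₀
      obtain ⟨c, hc⟩ := hu₀.2 x
      refine ⟨l * c, ?_⟩
      calc (l • u₀) * x * (l • u₀) = (l * l) • (u₀ * x * u₀) := by
            simp [smul_mul_assoc, mul_smul_comm, smul_smul]
        _ = (l * l) • (c • u₀) := by rw [hc]
        _ = (l * c) • (l • u₀) := by
            simp only [smul_smul]; ring_nf
    · -- (l • u₀) A ⊆ a A
      intro x
      refine ⟨l • (e * star v * a * x), ?_⟩
      calc (l • u₀) * x = l • (v * star v * a * x) := by
            rw [hu₀_def, smul_mul_assoc, mul_assoc, mul_assoc, mul_assoc,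
              ← mul_assoc, ← mul_assoc, ← mul_assoc]
        _ = l • (a * (e * star v * a * x)) := by
            rw [hv_def]; rw [mul_assoc a e _]; noncomm_ring
        _ = a * (l • (e * star v * a * x)) := by rw [mul_smul_comm]
    · -- A (l • u₀) ⊆ A a
      intro x
      refine ⟨l • (x * (v * star v)), ?_⟩
      calc x * (l • u₀) = l • (x * (v * star v) * a) := by
            rw [hu₀_def, mul_smul_comm]; rw [← mul_assoc, ← mul_assoc]
        _ = (l • (x * (v * star v))) * a := by rw [smul_mul_assoc]
    · -- the third diamond condition
      have lhs : (l • u₀) * star (l • u₀) * (l • u₀) = (l * star l * l * μ) • u₀ := by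
        rw [star_smul]
        calc (l • u₀) * (star l • star u₀) * (l • u₀)
            = (l * star l * l) • (u₀ * star u₀ * u₀) := by
              simp only [smul_mul_assoc, mul_smul_comm, smul_smul]; ring_nf
          _ = (l * star l * l * μ) • u₀ := by rw [hμ, smul_smul]
      have rhs : (l • u₀) * star a * (l • u₀) = (l * l * σ) • u₀ := by
        calc (l • u₀) * star a * (l • u₀)
            = (l * l) • (u₀ * star a * u₀) := by
              simp only [smul_mul_assoc, mul_smul_comm, smul_smul]
          _ = (l * l * σ) • u₀ := by rw [hua, smul_smul]
      rw [lhs, rhs]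
      congr 1
      rw [← hlstar]; ring
end

section
/- Let A be a unital C*-algebra, a ∈ A invertible, and p ∈ A a projection. Then pa ≤◇ a and ap ≤◇ a. -/
theorem proj_mul_invertible_diamond {A : Type*} [CStarAlgebra A] (a p : A)
    (ha : IsUnit a) (hp : p = star p ∧ p = p ^ 2) :
    Diamond (p * a) a ∧ Diamond (a * p) a := by
  obtain ⟨u, rfl⟩ := ha
  obtain ⟨hps, hpi⟩ := hp
  have hpp : p * p = p := by conv_rhs => rw [hpi, pow_two]
  refine ⟨⟨fun x => ⟨↑u⁻¹ * (p * ↑u * x), by simp [mul_assoc]⟩,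
    fun x => ⟨x * p, by noncomm_ring⟩, ?_⟩,
    ⟨fun x => ⟨p * x, by noncomm_ring⟩,
    fun x => ⟨x * ↑u * p * ↑u⁻¹, by simp [mul_assoc]⟩, ?_⟩⟩
  · rw [star_mul, ← hps]
    calc p * ↑u * (star ↑u * p) * (p * ↑u)
        = p * ↑u * star ↑u * (p * p) * ↑u := by noncomm_ring
      _ = p * ↑u * star ↑u * (p * ↑u) := by rw [hpp]; noncomm_ring
  · rw [star_mul, ← hps]
    calc ↑u * p * (p * star ↑u) * (↑u * p)
        = ↑u * (p * p) * star ↑u * (↑u * p) := by noncomm_ring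
      _ = ↑u * p * star ↑u * (↑u * p) := by rw [hpp]
end

section
/- Let A be a unital prime C*-algebra with nonzero socle and a ∈ A. If for every rank-one element u ∈ A there exist nonzero x ∈ uA and nonzero y ∈ Au with x ≤◇ a and y ≤◇ a, then a is invertible. -/
open scoped ComplexConjugate ComplexOrder

lemma isUnit_of_isUnit_map_of_injective {F A B : Type*} [CStarAlgebra A] [CStarAlgebra B]
    [FunLike F A B] [AlgHomClass F ℂ A B] [StarHomClass F A B] (φ : F)
    (hφ : Function.Injective φ) {a : A} (ha : IsUnit (φ a)) : IsUnit a := by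
  let ψ : A →⋆ₐ[ℂ] B := φ
  have : IsClosed (ψ.range : Set B) := by
    convert (NonUnitalStarAlgHom.isometry φ hφ).isClosedEmbedding.isClosed_range
    ext; rfl
  rw [← MulEquiv.isUnit_map (StarAlgEquiv.ofInjective ψ hφ)]
  exact ψ.range.coe_isUnit.mp ha

lemma IsStarProjection.nonneg_of_smul_nonneg {A : Type*} [CStarAlgebra A] [PartialOrder A]
    [StarOrderedRing A] {e : A} (he : IsStarProjection e) (he0 : e ≠ 0) {c : ℂ}
    (hc : 0 ≤ c • e) : 0 ≤ c := by
  have hreal : conj c = c := smul_left_injective ℂ he0 <| by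
    simpa [star_smul, he.isSelfAdjoint.star_eq] using hc.isSelfAdjoint.star_eq
  obtain ⟨r, rfl⟩ := Complex.conj_eq_iff_real.mp hreal
  by_contra hr
  rw [Complex.zero_le_real, not_le] at hr
  have hneg : 0 ≤ -((r : ℂ) • e) := by
    rw [← neg_smul]
    exact smul_nonneg (by exact_mod_cast (neg_pos.mpr hr).le) he.nonneg
  have : (r : ℂ) • e = 0 := le_antisymm (neg_nonneg.mp hneg) hc
  simp [hr.ne, he0] at this

lemma IsStarProjection.norm_eq_one {A : Type*} [CStarAlgebra A] {e : A}
    (he : IsStarProjection e) (he0 : e ≠ 0) : ‖e‖ = 1 := by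
  have h : ‖e‖ * ‖e‖ = ‖e‖ := by
    rw [← CStarRing.norm_star_mul_self, he.isSelfAdjoint.star_eq, he.isIdempotentElem.eq]
  exact (mul_eq_right₀ (norm_ne_zero_iff.mpr he0)).mp h

namespace IsRankOne

variable {A : Type*} [CStarAlgebra A] {u : A}

lemma ne_zero (hu : IsRankOne u) : u ≠ 0 := hu.1

protected lemma star (hu : IsRankOne u) : IsRankOne (star u) := by
  refine ⟨star_ne_zero.mpr hu.ne_zero, fun z => ?_⟩
  obtain ⟨c, hc⟩ := hu.2 (Star.star z)
  exact ⟨conj c, by simpa [star_mul, mul_assoc, star_smul] using congrArg Star.star hc⟩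

lemma star_mul_self (hu : IsRankOne u) : IsRankOne (star u * u) := by
  refine ⟨(CStarRing.star_mul_self_eq_zero_iff u).not.mpr hu.ne_zero, fun z => ?_⟩
  obtain ⟨c, hc⟩ := hu.2 (z * star u)
  refine ⟨c, ?_⟩
  calc star u * u * z * (star u * u) = star u * (u * (z * star u) * u) := by noncomm_ring
    _ = c • (star u * u) := by rw [hc, mul_smul_comm]

lemma smul (hu : IsRankOne u) {c : ℂ} (hc : c ≠ 0) : IsRankOne (c • u) := by
  refine ⟨smul_ne_zero hc hu.ne_zero, fun z => ?_⟩
  obtain ⟨d, hd⟩ := hu.2 z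
  refine ⟨c * d, ?_⟩
  simp only [smul_mul_assoc, mul_smul_comm, hd, smul_smul]
  ring_nf

lemma exists_smul_isStarProjection (hu : IsRankOne u) (hu' : IsSelfAdjoint u) :
    ∃ c : ℂ, c ≠ 0 ∧ IsStarProjection (c • u) := by
  obtain ⟨c, hc⟩ := hu.2 1
  rw [mul_one] at hc
  have hc0 : c ≠ 0 := by
    rintro rfl
    rw [zero_smul] at hc
    nth_rewrite 1 [← hu'.star_eq] at hc
    exact hu.ne_zero ((CStarRing.star_mul_self_eq_zero_iff u).mp hc)
  have hreal : conj c = c := smul_left_injective ℂ hu.ne_zero <| by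
    have h := congrArg Star.star hc
    rwa [star_mul, star_smul, hu'.star_eq, hc, Complex.star_def, eq_comm] at h
  refine ⟨c⁻¹, inv_ne_zero hc0, ⟨?_, ?_⟩⟩
  · rw [IsIdempotentElem, smul_mul_smul_comm, hc, smul_smul, mul_assoc, inv_mul_cancel₀ hc0,
      mul_one]
  · rw [IsSelfAdjoint, star_smul, hu'.star_eq, star_inv₀, Complex.star_def, hreal]

end IsRankOne

lemma Diamond.exists_eq_mul {A : Type*} [CStarAlgebra A] {x b : A} (h : Diamond x b) :
    ∃ s, x = b * s := by
  simpa using h.1 1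

lemma Diamond.exists_eq_mul_left {A : Type*} [CStarAlgebra A] {x b : A} (h : Diamond x b) :
    ∃ t, x = t * b := by
  simpa using h.2.1 1

def MeetsRankOneRightIdeals {A : Type*} [CStarAlgebra A] (b : A) : Prop :=
  ∀ u : A, IsRankOne u → ∃ r s : A, u * r ≠ 0 ∧ u * r = b * s

structure MinimalProjection (A : Type*) [CStarAlgebra A] where
  e : A
  isStarProjection : IsStarProjection e
  isRankOne : IsRankOne e

lemma IsRankOne.nonempty_minimalProjection {A : Type*} [CStarAlgebra A] {u : A}
    (hu : IsRankOne u) : Nonempty (MinimalProjection A) := by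
  obtain ⟨c, hc, hproj⟩ :=
    hu.star_mul_self.exists_smul_isStarProjection (IsSelfAdjoint.star_mul_self u)
  exact ⟨⟨_, hproj, hu.star_mul_self.smul hc⟩⟩

namespace MinimalProjection

variable {A : Type*} [CStarAlgebra A] (p : MinimalProjection A)

lemma e_ne_zero : p.e ≠ 0 := p.isRankOne.ne_zero

lemma e_mul_e : p.e * p.e = p.e := p.isStarProjection.isIdempotentElem.eq

lemma star_e : star p.e = p.e := p.isStarProjection.isSelfAdjoint.star_eq

noncomputable def coeff : A →ₗ[ℂ] ℂ where
  toFun z := (p.isRankOne.2 z).choose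
  map_add' z w := smul_left_injective ℂ p.e_ne_zero <| by
    dsimp only
    rw [add_smul, ← (p.isRankOne.2 (z + w)).choose_spec, ← (p.isRankOne.2 z).choose_spec,
      ← (p.isRankOne.2 w).choose_spec, mul_add, add_mul]
  map_smul' c z := smul_left_injective ℂ p.e_ne_zero <| by
    dsimp only
    rw [smul_eq_mul, RingHom.id_apply, mul_smul, ← (p.isRankOne.2 (c • z)).choose_spec,
      ← (p.isRankOne.2 z).choose_spec, mul_smul_comm, smul_mul_assoc]

lemma e_mul_mul_e (z : A) : p.e * z * p.e = p.coeff z • p.e := (p.isRankOne.2 z).choose_spec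

lemma coeff_eq {z : A} {c : ℂ} (h : p.e * z * p.e = c • p.e) : p.coeff z = c :=
  smul_left_injective ℂ p.e_ne_zero <| by simp only [← p.e_mul_mul_e, h]

lemma coeff_star (z : A) : p.coeff (star z) = conj (p.coeff z) := p.coeff_eq <| by
  simpa [star_mul, star_smul, p.star_e, mul_assoc] using congrArg star (p.e_mul_mul_e z)

/-- The minimal left ideal `A e`, as the fixed points of right multiplication by `e`. -/
def leftIdeal : Submodule ℂ A where
  carrier := {x | x * p.e = x}
  add_mem' {x y} hx hy := by simp_all [add_mul]
  zero_mem' := zero_mul _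
  smul_mem' c x hx := by simp_all

lemma mem_leftIdeal {x : A} : x ∈ p.leftIdeal ↔ x * p.e = x := Iff.rfl

lemma mul_mem_leftIdeal (z : A) {x : A} (hx : x ∈ p.leftIdeal) : z * x ∈ p.leftIdeal := by
  rw [mem_leftIdeal, mul_assoc, p.mem_leftIdeal.mp hx]

lemma e_mul_star_of_mem {x : A} (hx : x ∈ p.leftIdeal) : p.e * star x = star x := by
  simpa [star_mul, p.star_e] using congrArg star (p.mem_leftIdeal.mp hx)

instance : CompleteSpace p.leftIdeal :=
  (isClosed_eq (continuous_id.mul continuous_const) continuous_id).completeSpace_coe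

lemma star_mul_eq_coeff_smul {x y : A} (hx : x ∈ p.leftIdeal) (hy : y ∈ p.leftIdeal) :
    star x * y = p.coeff (star x * y) • p.e := by
  rw [← p.e_mul_mul_e, ← mul_assoc p.e, p.e_mul_star_of_mem hx, mul_assoc,
    p.mem_leftIdeal.mp hy]

lemma coeff_star_mul_self {x : A} (hx : x ∈ p.leftIdeal) :
    p.coeff (star x * x) = (‖x‖ : ℂ) ^ 2 := by
  let := CStarAlgebra.spectralOrder A
  have := CStarAlgebra.spectralOrderedRing A
  set c := p.coeff (star x * x)
  have hxx : star x * x = c • p.e := p.star_mul_eq_coeff_smul hx hx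
  have hnorm : ‖c‖ = ‖x‖ ^ 2 := by
    rw [sq, ← CStarRing.norm_star_mul_self, hxx, norm_smul,
      p.isStarProjection.norm_eq_one p.e_ne_zero, mul_one]
  have hpos : 0 ≤ c :=
    p.isStarProjection.nonneg_of_smul_nonneg p.e_ne_zero (hxx ▸ star_mul_self_nonneg x)
  rw [Complex.eq_coe_norm_of_nonneg hpos, hnorm, Complex.ofReal_pow]

noncomputable instance : InnerProductSpace ℂ p.leftIdeal where
  inner x y := p.coeff (star (x : A) * y)
  norm_sq_eq_re_inner x := by simp [p.coeff_star_mul_self x.2, ← Complex.ofReal_pow]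
  conj_inner_symm x y := by simp [← p.coeff_star, star_mul]
  add_left x y z := by simp [add_mul]
  smul_left x y r := by simp [star_smul]

lemma inner_def (x y : p.leftIdeal) : inner ℂ x y = p.coeff (star (x : A) * y) := rfl

noncomputable def leftMul (z : A) : p.leftIdeal →L[ℂ] p.leftIdeal :=
  (ContinuousLinearMap.mul ℂ A z).restrict fun _ => p.mul_mem_leftIdeal z

@[simp]
lemma coe_leftMul_apply (z : A) (x : p.leftIdeal) : (p.leftMul z x : A) = z * x := rfl

noncomputable def leftRep : A →⋆ₐ[ℂ] (p.leftIdeal →L[ℂ] p.leftIdeal) where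
  toFun := p.leftMul
  map_one' := by ext; simp
  map_mul' z w := by ext; simp [mul_assoc]
  map_zero' := by ext; simp
  map_add' z w := by ext; simp [add_mul]
  commutes' c := by ext; simp [Algebra.algebraMap_eq_smul_one]
  map_star' z := by
    rw [ContinuousLinearMap.star_eq_adjoint, ContinuousLinearMap.eq_adjoint_iff]
    intro x y
    simp [inner_def, star_mul, mul_assoc]

@[simp]
lemma coe_leftRep_apply (z : A) (x : p.leftIdeal) : (p.leftRep z x : A) = z * x := rfl

lemma leftRep_injective (hprime : ∀ x y : A, (∀ z : A, x * z * y = 0) → x = 0 ∨ y = 0) :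
    Function.Injective p.leftRep := by
  refine (injective_iff_map_eq_zero p.leftRep).mpr fun z hz => ?_
  refine (hprime z p.e fun t => ?_).resolve_right p.e_ne_zero
  have hte : t * p.e ∈ p.leftIdeal := p.mul_mem_leftIdeal t p.e_mul_e
  simpa [mul_assoc] using congrArg Subtype.val (DFunLike.congr_fun hz ⟨t * p.e, hte⟩)

lemma isRankOne_of_mem {x : A} (hx : x ∈ p.leftIdeal) (hx0 : x ≠ 0) : IsRankOne x := by
  refine ⟨hx0, fun z => ⟨p.coeff (z * x), ?_⟩⟩
  rw [mem_leftIdeal] at hx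
  calc x * z * x = x * p.e * z * (x * p.e) := by rw [hx]
    _ = x * (p.e * (z * x) * p.e) := by simp only [mul_assoc]
    _ = p.coeff (z * x) • x := by rw [p.e_mul_mul_e, mul_smul_comm, hx]

lemma exists_mem_mul_eq_of_mul_ne_zero {x r : A} (hx : x ∈ p.leftIdeal) (hxr : x * r ≠ 0) :
    ∃ t ∈ p.leftIdeal, x * r * t = x := by
  rw [mem_leftIdeal] at hx
  set c := p.coeff (r * star r)
  have hc : p.e * r * star r * p.e = c • p.e := by rw [mul_assoc p.e, p.e_mul_mul_e]
  have hc0 : c ≠ 0 := by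
    rintro hc0
    have her : p.e * r * star (p.e * r) = 0 := by
      rw [star_mul, p.star_e, ← mul_assoc, hc, hc0, zero_smul]
    rw [CStarRing.mul_star_self_eq_zero_iff] at her
    rw [← hx, mul_assoc, her, mul_zero] at hxr
    exact hxr rfl
  refine ⟨c⁻¹ • (star r * p.e),
    Submodule.smul_mem _ _ (p.mul_mem_leftIdeal _ p.e_mul_e), ?_⟩
  calc x * r * (c⁻¹ • (star r * p.e)) = c⁻¹ • (x * (p.e * r * star r * p.e)) := by
        rw [mul_smul_comm]
        nth_rewrite 1 [← hx]
        simp only [mul_assoc]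
    _ = x := by rw [hc, mul_smul_comm, hx, inv_smul_smul₀ hc0]

lemma exists_mem_mul_eq {b : A} (hb : MeetsRankOneRightIdeals b) {x : A}
    (hx : x ∈ p.leftIdeal) : ∃ g ∈ p.leftIdeal, b * g = x := by
  rcases eq_or_ne x 0 with rfl | hx0
  · exact ⟨0, p.leftIdeal.zero_mem, mul_zero b⟩
  obtain ⟨r, s, hr, hrs⟩ := hb x (p.isRankOne_of_mem hx hx0)
  obtain ⟨t, ht, hrt⟩ := p.exists_mem_mul_eq_of_mul_ne_zero hx hr
  exact ⟨s * t, p.mul_mem_leftIdeal s ht, by rw [← mul_assoc, ← hrs, hrt]⟩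

lemma leftRep_bijective {a : A} (ha : MeetsRankOneRightIdeals a)
    (ha' : MeetsRankOneRightIdeals (star a)) : Function.Bijective (p.leftRep a) := by
  refine ⟨(injective_iff_map_eq_zero _).mpr fun g hg => ?_, fun x => ?_⟩
  · obtain ⟨h, -, hhg⟩ := p.exists_mem_mul_eq ha' g.2
    have hag : a * g = 0 := congrArg Subtype.val hg
    have : star (g : A) * g = 0 :=
      calc star (g : A) * g = star (star a * h) * g := by rw [hhg]
        _ = star h * (a * g) := by rw [star_mul, star_star, mul_assoc]
        _ = 0 := by rw [hag, mul_zero]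
    exact Subtype.ext ((CStarRing.star_mul_self_eq_zero_iff _).mp this)
  · obtain ⟨g, hg, hgx⟩ := p.exists_mem_mul_eq ha x.2
    exact ⟨⟨g, hg⟩, Subtype.ext hgx⟩

end MinimalProjection

theorem invertible_of_rankOne_diamond {A : Type*} [CStarAlgebra A]
    (hprime : ∀ x y : A, (∀ z : A, x * z * y = 0) → x = 0 ∨ y = 0)
    (hsoc : ∃ u : A, IsRankOne u)
    (a : A)
    (h : ∀ u : A, IsRankOne u →
      (∃ x : A, x ≠ 0 ∧ (∃ r : A, x = u * r) ∧ Diamond x a) ∧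
      (∃ y : A, y ≠ 0 ∧ (∃ l : A, y = l * u) ∧ Diamond y a)) :
    IsUnit a := by
  obtain ⟨u, hu⟩ := hsoc
  obtain ⟨p⟩ := hu.nonempty_minimalProjection
  have ha : MeetsRankOneRightIdeals a := fun u hu => by
    obtain ⟨⟨x, hx0, ⟨r, rfl⟩, hxa⟩, -⟩ := h u hu
    obtain ⟨s, hs⟩ := hxa.exists_eq_mul
    exact ⟨r, s, hx0, hs⟩
  have ha' : MeetsRankOneRightIdeals (star a) := fun u hu => by
    obtain ⟨-, y, hy0, ⟨l, rfl⟩, hya⟩ := h (star u) hu.star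
    obtain ⟨t, ht⟩ := hya.exists_eq_mul_left
    refine ⟨star l, star t, ?_, ?_⟩
    · simpa [star_mul] using star_ne_zero.mpr hy0
    · simpa [star_mul] using congrArg star ht
  exact isUnit_of_isUnit_map_of_injective p.leftRep (p.leftRep_injective hprime)
    (ContinuousLinearMap.isUnit_iff_bijective.mpr (p.leftRep_bijective ha ha'))
end

section
/- Let A and B be C*-algebras and T : A → B a Jordan *-homomorphism. Then T strongly preserves Moore-Penrose invertibility: for every regular a ∈ A, T(a) is regular and T(a†) = T(a)†. -/
private lemma double_cancel {M : Type*} [AddCommGroup M] [Module ℂ M] {u v : M}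
    (h : u + u = v + v) : u = v := by
  have h2 : (2:ℂ) • u = (2:ℂ) • v := by rw [two_smul, two_smul]; exact h
  exact smul_right_injective M two_ne_zero h2

private lemma normal_idem_selfadj {B : Type*} [CStarAlgebra B] (E : B)
    (h2 : E * E = E) (hn : E * star E = star E * E) : star E = E := by
  have h2s : star E * star E = star E := by rw [← star_mul, h2]
  have key : star E * (1 - E) = 0 := by
    apply (CStarRing.star_mul_self_eq_zero_iff _).mp
    calc star (star E * (1 - E)) * (star E * (1 - E))
        = ((1 - star E) * E) * (star E * (1 - E)) := by
          rw [star_mul, star_star, star_sub, star_one]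
      _ = (1 - star E) * (E * star E) * (1 - E) := by noncomm_ring
      _ = (1 - star E) * (star E * E) * (1 - E) := by rw [hn]
      _ = (star E - star E * star E) * E * (1 - E) := by noncomm_ring
      _ = (star E - star E) * E * (1 - E) := by rw [h2s]
      _ = 0 := by noncomm_ring
  have key1 : star E = star E * E := by
    rw [mul_sub, mul_one, sub_eq_zero] at key
    exact key
  have key2 : E = star E * E := by
    conv_lhs => rw [← star_star E, key1, star_mul, star_star]
  exact key1.trans key2.symm

private lemma jordan_triple {A B : Type*} [CStarAlgebra A] [CStarAlgebra B]
    (T : A →ₗ[ℂ] B) (hJ : ∀ a : A, T (a ^ 2) = (T a) ^ 2) :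
    ∀ x y z : A, T (x*y*z + z*y*x) = T x * T y * T z + T z * T y * T x := by
  have j2 : ∀ x y : A, T (x*y + y*x) = T x * T y + T y * T x := by
    intro x y
    have h := hJ (x + y)
    have e1 : (x+y)^2 = x^2 + (x*y + y*x) + y^2 := by noncomm_ring
    rw [e1, map_add, map_add, hJ, hJ, map_add T x y] at h
    have e2 : (T x + T y)^2 = (T x)^2 + (T x * T y + T y * T x) + (T y)^2 := by
      noncomm_ring
    rw [e2] at h
    exact add_left_cancel (add_right_cancel h)
  intro x y z
  have key : (x*(y*z+z*y) + (y*z+z*y)*x) - (y*(x*z+z*x) + (x*z+z*x)*y)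
      + (z*(x*y+y*x) + (x*y+y*x)*z) = (x*y*z + z*y*x) + (x*y*z + z*y*x) := by
    noncomm_ring
  have h := congrArg T key
  rw [map_add, map_sub, j2 x (y*z+z*y), j2 y (x*z+z*x), j2 z (x*y+y*x),
    j2 y z, j2 x z, j2 x y, map_add] at h
  refine double_cancel (Eq.trans ?_ (h.symm.trans (by noncomm_ring)))
  exact (map_add T _ _).symm ▸ rfl

private lemma mp_aux {A B : Type*} [CStarAlgebra A] [CStarAlgebra B]
    (T : A →ₗ[ℂ] B)
    (hJ : ∀ a : A, T (a ^ 2) = (T a) ^ 2)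
    (hstar : ∀ a : A, T (star a) = star (T a))
    (a ad : A)
    (h1 : a * ad * a = a) (h2 : ad * a * ad = ad)
    (h3 : star (a * ad) = a * ad) (h4 : star (ad * a) = ad * a) :
    T a * T ad * T a = T a ∧ star (T a * T ad) = T a * T ad := by
  have triple := jordan_triple T hJ
  set X := T a with hX
  set Y := T ad with hY
  -- Goal 1
  have g1 : X * Y * X = X := by
    have h := triple a ad a
    rw [h1, map_add] at h
    exact (double_cancel h).symm
  -- algebraic identities in A
  have e3 : a * ad * star ad = star ad := by
    calc a * ad * star ad = star (a*ad) * star ad := by rw [h3]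
      _ = star (ad * (a * ad)) := (star_mul _ _).symm
      _ = star (ad * a * ad) := by rw [mul_assoc]
      _ = star ad := by rw [h2]
  have e4 : star ad * ad * a = star ad := by
    calc star ad * ad * a = star ad * (ad * a) := by rw [mul_assoc]
      _ = star ad * star (ad * a) := by rw [h4]
      _ = star (ad * a * ad) := (star_mul _ _).symm
      _ = star ad := by rw [h2]
  have e5 : star ad * star a * a = a := by
    calc star ad * star a * a = star (a * ad) * a := by rw [star_mul]
      _ = a * ad * a := by rw [h3]
      _ = a := h1
  have e6 : a * star a * star ad = a := by
    calc a * star a * star ad = a * (star a * star ad) := mul_assoc _ _ _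
      _ = a * star (ad * a) := by rw [star_mul]
      _ = a * (ad * a) := by rw [h4]
      _ = a := by rw [← mul_assoc, h1]
  -- rel3 : X*Y*Y⋆ + Y⋆*Y*X = Y⋆ + Y⋆
  have rel3 : star Y + star Y = X * Y * star Y + star Y * Y * X := by
    have h := triple a ad (star ad)
    rw [e3, e4, map_add] at h
    simp only [hstar, hY] at h
    exact h
  -- rel5 : Y⋆*X⋆*X + X*X⋆*Y⋆ = X + X
  have rel5 : X + X = star Y * star X * X + X * star X * star Y := by
    have h := triple (star ad) (star a) a
    rw [e5, e6, map_add] at h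
    simp only [hstar, hX, hY] at h
    exact h
  have rel6 := congrArg star rel5
  simp only [star_add, star_mul, star_star] at rel6
  have r3' : X * Y * star Y = star Y + star Y - star Y * Y * X := by
    rw [rel3]; abel
  have r6' : Y * X * star X = star X + star X - star X * X * Y := by
    rw [rel6]; noncomm_ring
  have hnorm : (X*Y) * star (X*Y) = star (X*Y) * (X*Y) := by
    rw [star_mul]
    calc X * Y * (star Y * star X)
        = (X * Y * star Y) * star X := by noncomm_ring
      _ = (star Y + star Y - star Y * Y * X) * star X := by rw [r3']
      _ = star Y * star X + star Y * star X - star Y * (Y * X * star X) := by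
          noncomm_ring
      _ = star Y * star X + star Y * star X
          - star Y * (star X + star X - star X * X * Y) := by rw [r6']
      _ = star Y * star X * (X * Y) := by noncomm_ring
  have hE2 : (X*Y) * (X*Y) = X*Y := by
    calc (X*Y) * (X*Y) = (X*Y*X)*Y := by noncomm_ring
      _ = X*Y := by rw [g1]
  exact ⟨g1, normal_idem_selfadj _ hE2 hnorm⟩

theorem jordan_star_hom_preserves_mp {A B : Type*} [CStarAlgebra A] [CStarAlgebra B]
    (T : A →ₗ[ℂ] B)
    (hJ : ∀ a : A, T (a ^ 2) = (T a) ^ 2)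
    (hstar : ∀ a : A, T (star a) = star (T a))
    (a ad : A)
    (h1 : a * ad * a = a) (h2 : ad * a * ad = ad)
    (h3 : star (a * ad) = a * ad) (h4 : star (ad * a) = ad * a) :
    T a * T ad * T a = T a ∧ T ad * T a * T ad = T ad ∧
    star (T a * T ad) = T a * T ad ∧ star (T ad * T a) = T ad * T a := by
  obtain ⟨g1, g3⟩ := mp_aux T hJ hstar a ad h1 h2 h3 h4
  obtain ⟨g2, g4⟩ := mp_aux T hJ hstar ad a h2 h1 h4 h3
  exact ⟨g1, g2, g3, g4⟩
end

section
/- Let A and B be C*-algebras and T : A → B a Jordan homomorphism. If a, b ∈ A are regular and a ≤⁻ b (there exists a generalized inverse b⁻ of b with a = a b⁻ a = a b⁻ b = b b⁻ a), then T(a) ≤⁻ T(b). -/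
theorem jordan_hom_preserves_minus {A B : Type*} [CStarAlgebra A] [CStarAlgebra B]
    (T : A →ₗ[ℂ] B)
    (hJ : ∀ a : A, T (a ^ 2) = (T a) ^ 2)
    (a b : A)
    (ha : ∃ x : A, a * x * a = a)
    (h : ∃ bm : A, b * bm * b = b ∧ bm * b * bm = bm ∧
      a = a * bm * a ∧ a = a * bm * b ∧ a = b * bm * a) :
    ∃ c : B, T b * c * T b = T b ∧ c * T b * c = c ∧
      T a = T a * c * T a ∧ T a = T a * c * T b ∧ T a = T b * c * T a := by
  obtain ⟨bm, hb1, hb2, hb3, hb4, hb5⟩ := h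
  -- polarized Jordan identity
  have hbl : ∀ x y : A, T (x * y + y * x) = T x * T y + T y * T x := by
    intro x y
    have h0 := hJ (x + y)
    have e1 : (x + y) ^ 2 = x ^ 2 + (x * y + y * x) + y ^ 2 := by noncomm_ring
    have e2 : (T x + T y) ^ 2 = T x ^ 2 + (T x * T y + T y * T x) + T y ^ 2 := by
      noncomm_ring
    rw [e1] at h0
    rw [map_add T x y, e2] at h0
    have h0' : T (x ^ 2) + T (x * y + y * x) + T (y ^ 2)
        = T x ^ 2 + (T x * T y + T y * T x) + T y ^ 2 := by
      calc T (x ^ 2) + T (x * y + y * x) + T (y ^ 2)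
          = T (x ^ 2 + (x * y + y * x) + y ^ 2) := by
            rw [map_add T (x ^ 2 + (x * y + y * x)) (y ^ 2),
              map_add T (x ^ 2) (x * y + y * x)]
        _ = _ := h0
    have h0'' := h0'
    rw [hJ, hJ] at h0''
    exact add_left_cancel (add_right_cancel h0'')
  have half : ∀ u v : B, u + u = v + v → u = v := by
    intro u v huv
    have h2 : (2 : ℂ) • u = (2 : ℂ) • v := by rw [two_smul, two_smul]; exact huv
    exact smul_right_injective B two_ne_zero h2
  -- Jordan triple identity
  have ht : ∀ x y : A, T (x * y * x) = T x * T y * T x := by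
    intro x y
    have h1' := hbl x (x * y + y * x)
    have e1 : x * (x * y + y * x) + (x * y + y * x) * x
        = (x * x * y + y * (x * x)) + (x * y * x + x * y * x) := by noncomm_ring
    rw [e1] at h1'
    have e3 : T (x * x) = T x * T x := by
      have := hJ x; rwa [sq, sq] at this
    have e4 : T (x * x * y + y * (x * x) + (x * y * x + x * y * x))
        = (T x * T x * T y + T y * (T x * T x)) + (T (x * y * x) + T (x * y * x)) := by
      rw [map_add, map_add (f := T) (x * y * x), hbl (x * x) y, e3]
    rw [e4, hbl x y] at h1'
    have rhs : T x * (T x * T y + T y * T x) + (T x * T y + T y * T x) * T x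
        = (T x * T x * T y + T y * (T x * T x)) + (T x * T y * T x + T x * T y * T x) := by
      noncomm_ring
    rw [rhs] at h1'
    exact half _ _ (add_left_cancel h1')
  -- symmetrized triple
  have hs : ∀ x y z : A, T (x * y * z + z * y * x)
      = T x * T y * T z + T z * T y * T x := by
    intro x y z
    have h1' := ht (x + z) y
    have e1 : (x + z) * y * (x + z)
        = x * y * x + (x * y * z + z * y * x) + z * y * z := by noncomm_ring
    have e2 : (T x + T z) * T y * (T x + T z)
        = T x * T y * T x + (T x * T y * T z + T z * T y * T x) + T z * T y * T z := by
      noncomm_ring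
    rw [e1, map_add T x z, e2] at h1'
    have h1'' : T (x * y * x) + T (x * y * z + z * y * x) + T (z * y * z)
        = T x * T y * T x + (T x * T y * T z + T z * T y * T x) + T z * T y * T z := by
      calc T (x * y * x) + T (x * y * z + z * y * x) + T (z * y * z)
          = T (x * y * x + (x * y * z + z * y * x) + z * y * z) := by
            rw [map_add T (x * y * x + (x * y * z + z * y * x)) (z * y * z),
              map_add T (x * y * x) (x * y * z + z * y * x)]
        _ = _ := h1'
    rw [ht x y, ht z y] at h1''
    exact add_left_cancel (add_right_cancel h1'')
  set α := T a with hα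
  set β := T b with hβ
  set γ := T bm with hγ
  have E1 : β * γ * β = β := by rw [← ht, hb1]
  have E2 : γ * β * γ = γ := by rw [← ht, hb2]
  have E3 : α * γ * α = α := by rw [← ht, ← hb3]
  have S : α * γ * β + β * γ * α = α + α := by
    rw [← hs, ← hb4, ← hb5, map_add]
  have hαγβ : α * γ * β = (α + α) - β * γ * α := eq_sub_of_add_eq S
  have hβγα : β * γ * α = (α + α) - α * γ * β := by
    rw [← S]; abel
  have W1 : α * γ * β * γ * α = (α + α) - β * γ * α := by
    calc α * γ * β * γ * α = ((α + α) - β * γ * α) * γ * α := by rw [hαγβ]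
      _ = (α * γ * α + α * γ * α) - β * γ * (α * γ * α) := by noncomm_ring
      _ = (α + α) - β * γ * α := by rw [E3]
  have W2 : α * γ * β * γ * α = (α + α) - α * γ * β := by
    calc α * γ * β * γ * α = α * γ * ((α + α) - α * γ * β) := by
          rw [← hβγα]; noncomm_ring
      _ = (α * γ * α + α * γ * α) - α * γ * α * γ * β := by noncomm_ring
      _ = (α + α) - α * γ * β := by rw [E3]
  have Wsym : β * γ * α = α * γ * β := sub_right_inj.mp (W1.symm.trans W2)
  have F1 : α * γ * β = α := by
    apply half
    calc α * γ * β + α * γ * β = α * γ * β + β * γ * α := by rw [Wsym]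
      _ = α + α := S
  have F2 : β * γ * α = α := by rw [Wsym]; exact F1
  exact ⟨γ, E1, E2, E3.symm, F1.symm, F2.symm⟩
end
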